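/- arXiv:1905.08219 — 7 statements merged into one kernel-verified Lean document; each statement's English description precedes it below -/
import Mathlib

section
/- A super-commutative super-ring R = R₀ ⊕ R₁ is Noetherian (i.e., its ℤ/2-homogeneous ideals satisfy the ascending chain condition) if and only if R₀ is a Noetherian commutative ring and R₁ is a finitely generated R₀-module. -/
open DirectSum

section Key

variable {R₀ R : Type*} [CommRing R₀] [Ring R] [Algebra R₀ R]
variable (𝒜 : ZMod 2 → Submodule R₀ R) [GradedAlgebra 𝒜]

/-- Every element is the sum of its even and odd parts. -/
lemma superring_decomp_two (j : ZMod 2) (r : R) :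
    r = (DirectSum.decompose 𝒜 r j : R) + (DirectSum.decompose 𝒜 r (j + 1) : R) := by
  classical
  have hne : j ≠ j + 1 := fun hh => one_ne_zero (left_eq_add.mp hh)
  have huniv : (Finset.univ : Finset (ZMod 2)) = {j, j + 1} := by revert j; decide
  have h2 : ∑ i ∈ (Finset.univ : Finset (ZMod 2)), (DirectSum.decompose 𝒜 r i : R) = r := by
    rw [← Finset.sum_subset (Finset.subset_univ (DFinsupp.support (DirectSum.decompose 𝒜 r)))
      (fun x _ hx => by rw [DFinsupp.notMem_support_iff.mp hx]; rfl)]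
    exact DirectSum.sum_support_decompose 𝒜 r
  rw [huniv, Finset.sum_pair hne] at h2
  exact h2.symm

lemma superring_key (h0 : 𝒜 0 = 1) (i : ZMod 2) (S : Set R) (hS : ∀ x ∈ S, x ∈ 𝒜 i)
    {y : R} (hy : y ∈ 𝒜 i) (hyJ : y ∈ Ideal.span S) : y ∈ Submodule.span R₀ S := by
  classical
  set M : Submodule R₀ R := Submodule.span R₀ S with hM
  set M' : Submodule R₀ R :=
    Submodule.span R₀ {z : R | ∃ a ∈ 𝒜 1, ∃ x ∈ S, z = a * x} with hM'
  -- even elements act as scalars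
  have hscal : ∀ r₀ ∈ 𝒜 0, ∀ (N : Submodule R₀ R), ∀ m ∈ N, r₀ * m ∈ N := by
    intro r₀ hr₀ N m hm
    rw [h0] at hr₀
    obtain ⟨c, rfl⟩ := Submodule.mem_one.mp hr₀
    rw [← Algebra.smul_def]
    exact N.smul_mem c hm
  have hodd1 : ∀ r₁ ∈ 𝒜 1, ∀ m ∈ M, r₁ * m ∈ M' := by
    intro r₁ hr₁ m hm
    induction hm using Submodule.span_induction with
    | mem x hx => exact Submodule.subset_span ⟨r₁, hr₁, x, hx, rfl⟩
    | zero => rw [mul_zero]; exact M'.zero_mem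
    | add a b _ _ ha hb => rw [mul_add]; exact M'.add_mem ha hb
    | smul c a _ ha => rw [mul_smul_comm]; exact M'.smul_mem c ha
  have hodd2 : ∀ r₁ ∈ 𝒜 1, ∀ m ∈ M', r₁ * m ∈ M := by
    intro r₁ hr₁ m hm
    induction hm using Submodule.span_induction with
    | mem z hz =>
      obtain ⟨a, ha, x, hx, rfl⟩ := hz
      rw [← mul_assoc]
      have : r₁ * a ∈ 𝒜 0 := by
        have h := SetLike.mul_mem_graded hr₁ ha
        have h11 : (1 : ZMod 2) + 1 = 0 := by decide
        rwa [h11] at h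
      exact hscal _ this M x (Submodule.subset_span hx)
    | zero => rw [mul_zero]; exact M.zero_mem
    | add a b _ _ ha hb => rw [mul_add]; exact M.add_mem ha hb
    | smul c a _ ha => rw [mul_smul_comm]; exact M.smul_mem c ha
  -- main induction over the ideal span
  rw [← Ideal.submodule_span_eq] at hyJ
  have main : ∀ r, r ∈ Submodule.span R S →
      (DirectSum.decompose 𝒜 r i : R) ∈ M ∧ (DirectSum.decompose 𝒜 r (i + 1) : R) ∈ M' := by
    intro r hr
    induction hr using Submodule.span_induction with
    | mem x hx =>
      constructor
      · rw [DirectSum.decompose_of_mem_same 𝒜 (hS x hx)]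
        exact Submodule.subset_span hx
      · rw [DirectSum.decompose_of_mem_ne 𝒜 (hS x hx)
          (fun hh => one_ne_zero (left_eq_add.mp hh))]
        exact M'.zero_mem
    | zero => simp
    | add a b _ _ ha hb =>
      rw [DirectSum.decompose_add]
      exact ⟨by simpa using M.add_mem ha.1 hb.1, by simpa using M'.add_mem ha.2 hb.2⟩
    | smul r x hx hxP =>
      rw [smul_eq_mul]
      set x₀ : R := (DirectSum.decompose 𝒜 x i : R) with hx₀
      set x₁ : R := (DirectSum.decompose 𝒜 x (i + 1) : R) with hx₁
      set r₀ : R := (DirectSum.decompose 𝒜 r 0 : R) with hr₀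
      set r₁ : R := (DirectSum.decompose 𝒜 r 1 : R) with hr₁
      have hx₀m : x₀ ∈ 𝒜 i := (DirectSum.decompose 𝒜 x i).2
      have hx₁m : x₁ ∈ 𝒜 (i + 1) := (DirectSum.decompose 𝒜 x (i + 1)).2
      have hr₀m : r₀ ∈ 𝒜 0 := (DirectSum.decompose 𝒜 r 0).2
      have hr₁m : r₁ ∈ 𝒜 1 := (DirectSum.decompose 𝒜 r 1).2
      have hxe : x = x₀ + x₁ := superring_decomp_two 𝒜 i x
      have hre : r = r₀ + r₁ := superring_decomp_two 𝒜 0 r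
      have hni : i + 1 ≠ i := fun h =>
        (one_ne_zero : (1 : ZMod 2) ≠ 0) (by
          have h' : i + 1 = i + 0 := by rw [add_zero]; exact h
          exact add_left_cancel h')
      have hexp : r * x = (r₀ * x₀ + r₁ * x₁) + (r₀ * x₁ + r₁ * x₀) := by
        rw [hre, hxe, add_mul, mul_add, mul_add]; abel
      have m00 : r₀ * x₀ ∈ 𝒜 i := by simpa using SetLike.mul_mem_graded hr₀m hx₀m
      have m11 : r₁ * x₁ ∈ 𝒜 i := by
        have hh := SetLike.mul_mem_graded hr₁m hx₁m
        have h2 : (1 : ZMod 2) + (i + 1) = i := by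
          rw [add_comm i 1, ← add_assoc, (by decide : (1 : ZMod 2) + 1 = 0), zero_add]
        rwa [h2] at hh
      have m01 : r₀ * x₁ ∈ 𝒜 (i + 1) := by simpa using SetLike.mul_mem_graded hr₀m hx₁m
      have m10 : r₁ * x₀ ∈ 𝒜 (i + 1) := by
        have := SetLike.mul_mem_graded hr₁m hx₀m
        rwa [add_comm] at this
      have comp_eq : ∀ u v : R, u ∈ 𝒜 i → v ∈ 𝒜 (i + 1) →
          (DirectSum.decompose 𝒜 (u + v) i : R) = u ∧
          (DirectSum.decompose 𝒜 (u + v) (i + 1) : R) = v := by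
        intro u v hu hv
        rw [DirectSum.decompose_add]
        constructor
        · rw [DirectSum.add_apply, Submodule.coe_add,
            DirectSum.decompose_of_mem_same 𝒜 hu, DirectSum.decompose_of_mem_ne 𝒜 hv hni,
            add_zero]
        · rw [DirectSum.add_apply, Submodule.coe_add,
            DirectSum.decompose_of_mem_same 𝒜 hv, DirectSum.decompose_of_mem_ne 𝒜 hu hni.symm,
            zero_add]
      have e12 := comp_eq _ _ ((𝒜 i).add_mem m00 m11) ((𝒜 (i + 1)).add_mem m01 m10)
      constructor
      · rw [hexp, e12.1]
        exact M.add_mem (hscal _ hr₀m M _ hxP.1) (hodd2 _ hr₁m _ hxP.2)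
      · rw [hexp, e12.2]
        exact M'.add_mem (hscal _ hr₀m M' _ hxP.2) (hodd1 _ hr₁m _ hxP.1)
  have := (main y hyJ).1
  rwa [DirectSum.decompose_of_mem_same 𝒜 hy] at this

end Key

/-- A super-commutative super-ring `R = R₀ ⊕ R₁` (modelled as a
ℤ/2-graded algebra over its even part `R₀`, with `𝒜 0` the canonical image of `R₀`
and all odd squares zero) is Noetherian — its homogeneous (super-)ideals satisfy the
ascending chain condition — iff `R₀` is a Noetherian ring and `R₁ = 𝒜 1` is a
finitely generated `R₀`-module. -/
theorem noetherian_superring_iff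
    {R₀ R : Type*} [CommRing R₀] [Ring R] [Algebra R₀ R]
    (𝒜 : ZMod 2 → Submodule R₀ R) [GradedAlgebra 𝒜]
    (h0 : 𝒜 0 = 1) (hinj : Function.Injective (algebraMap R₀ R))
    (hsq : ∀ a ∈ 𝒜 1, a * a = 0) :
    (∀ f : ℕ →o Ideal R, (∀ n, (f n).IsHomogeneous 𝒜) →
        ∃ n, ∀ m, n ≤ m → f m = f n) ↔
    (IsNoetherianRing R₀ ∧ Module.Finite R₀ (𝒜 1)) := by
  constructor
  · intro hACC
    constructor
    · -- R₀ is Noetherian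
      rw [isNoetherianRing_iff, ← monotone_stabilizes_iff_noetherian]
      intro g
      set F : ℕ →o Ideal R :=
        ⟨fun n => Ideal.span (algebraMap R₀ R '' (g n)),
          fun a b hab => Ideal.span_mono (Set.image_mono (g.monotone hab))⟩ with hF
      have hhom : ∀ n, (F n).IsHomogeneous 𝒜 := by
        intro n
        refine Ideal.homogeneous_span 𝒜 _ fun x hx => ?_
        obtain ⟨c, _, rfl⟩ := hx
        exact ⟨0, by rw [h0]; exact Submodule.algebraMap_mem c⟩
      obtain ⟨n, hn⟩ := hACC F hhom
      refine ⟨n, fun m hm => le_antisymm (g.monotone hm) fun x hx => ?_⟩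
      have hmem : algebraMap R₀ R x ∈ F n := by
        rw [← hn m hm]
        exact Ideal.subset_span ⟨x, hx, rfl⟩
      have hdeg : algebraMap R₀ R x ∈ 𝒜 0 := by
        rw [h0]; exact Submodule.algebraMap_mem x
      have hspan := superring_key 𝒜 h0 0 (algebraMap R₀ R '' (g n))
        (fun z hz => by obtain ⟨c, _, rfl⟩ := hz; rw [h0]; exact Submodule.algebraMap_mem c)
        hdeg hmem
      rw [show (⇑(algebraMap R₀ R) '' ↑(g n)) = ⇑(Algebra.linearMap R₀ R) '' ↑(g n) from rfl,
        Submodule.span_image, Submodule.span_eq] at hspan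
      obtain ⟨x', hx', hxx⟩ := hspan
      have hxx' : x' = x := hinj hxx
      rwa [← hxx']
    · -- 𝒜 1 is a finitely generated R₀-module
      suffices h : IsNoetherian R₀ ↥(𝒜 1) by infer_instance
      rw [← monotone_stabilizes_iff_noetherian]
      intro g
      set F : ℕ →o Ideal R :=
        ⟨fun n => Ideal.span (((g n).map (𝒜 1).subtype : Submodule R₀ R) : Set R),
          fun a b hab => Ideal.span_mono (Submodule.map_mono (g.monotone hab))⟩ with hF
      have hhom : ∀ n, (F n).IsHomogeneous 𝒜 := by
        intro n
        refine Ideal.homogeneous_span 𝒜 _ fun x hx => ?_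
        obtain ⟨c, _, rfl⟩ := hx
        exact ⟨1, c.2⟩
      obtain ⟨n, hn⟩ := hACC F hhom
      refine ⟨n, fun m hm => le_antisymm (g.monotone hm) fun x hx => ?_⟩
      have hmem : (x : R) ∈ F n := by
        rw [← hn m hm]
        exact Ideal.subset_span ⟨x, hx, rfl⟩
      have hspan := superring_key 𝒜 h0 1 (((g n).map (𝒜 1).subtype : Submodule R₀ R) : Set R)
        (fun z hz => by obtain ⟨c, _, rfl⟩ := hz; exact c.2) x.2 hmem
      rw [Submodule.span_eq] at hspan
      obtain ⟨x', hx', hxx⟩ := hspan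
      rwa [← Subtype.ext hxx]
  · rintro ⟨hN, hFin⟩ f _
    -- R is a finitely generated R₀-module
    have htop : (⊤ : Submodule R₀ R) = 𝒜 0 ⊔ 𝒜 1 := by
      refine le_antisymm (fun r _ => ?_) le_top
      rw [superring_decomp_two 𝒜 0 r]
      exact Submodule.add_mem _ (Submodule.mem_sup_left (DirectSum.decompose 𝒜 r 0).2)
        (Submodule.mem_sup_right (DirectSum.decompose 𝒜 r 1).2)
    have hfg : (⊤ : Submodule R₀ R).FG := by
      rw [htop]
      refine Submodule.FG.sup ?_ ?_
      · rw [h0, Submodule.one_eq_span]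
        exact Submodule.fg_span_singleton 1
      · exact Module.Finite.iff_fg.mp hFin
    have : Module.Finite R₀ R := Module.finite_def.mpr hfg
    have : IsNoetherian R₀ R := isNoetherian_of_isNoetherianRing_of_finite R₀ R
    obtain ⟨n, hn⟩ := monotone_stabilizes_iff_noetherian.mpr this
      ⟨fun n => (f n).restrictScalars R₀, fun a b hab => by
        intro x hx; exact f.monotone hab hx⟩
    exact ⟨n, fun m hm => Submodule.restrictScalars_injective R₀ R R (hn m hm).symm⟩
end

section
/- Let A be a super-commutative super-ring. If for every s ∈ A₀ \ A₁² and every a ∈ A, sa = 0 implies a = 0, then for every s ∈ A \ I_A and every a ∈ A, sa = 0 implies a = 0 (where I_A = A·A₁). In other words, the condition that homogeneous even elements outside A₁² are non-zero-divisors implies that all elements outside I_A are non-zero-divisors. -/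
/-- In a super-commutative super-ring `A`: if every even element
outside `A₁²` (the ideal generated by products of two odd elements) is a
non-zero-divisor, then every element outside `I_A = A·A₁` is a non-zero-divisor. -/
theorem regular_outside_IA_of_regular_even
    {R : Type*} [Ring R]
    (𝒜 : ZMod 2 → AddSubgroup R) [GradedRing 𝒜]
    (hc0 : ∀ r s : R, r ∈ 𝒜 0 → r * s = s * r)
    (hsq : ∀ s : R, s ∈ 𝒜 1 → s * s = 0)
    (h : ∀ s : R, s ∈ 𝒜 0 →
      s ∉ Ideal.span {x : R | ∃ a ∈ 𝒜 1, ∃ b ∈ 𝒜 1, x = a * b} →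
      ∀ a : R, s * a = 0 → a = 0) :
    ∀ s : R, s ∉ Ideal.span {x : R | x ∈ 𝒜 1} →
      ∀ a : R, s * a = 0 → a = 0 := by
  intro s hs a hsa
  set s0 : R := (DirectSum.decompose 𝒜 s 0 : R) with hs0def
  set s1 : R := (DirectSum.decompose 𝒜 s 1 : R) with hs1def
  have hs0mem : s0 ∈ 𝒜 0 := (DirectSum.decompose 𝒜 s 0).2
  have hs1mem : s1 ∈ 𝒜 1 := (DirectSum.decompose 𝒜 s 1).2
  classical
  have hsum : s0 + s1 = s := by
    have h2 : ∑ i : ZMod 2, (DirectSum.decompose 𝒜 s i : R)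
        = ∑ i ∈ DFinsupp.support (DirectSum.decompose 𝒜 s),
            (DirectSum.decompose 𝒜 s i : R) := by
      refine (Finset.sum_subset (Finset.subset_univ _) ?_).symm
      intro i _ hi
      simp only [DFinsupp.notMem_support_iff] at hi
      rw [hi]; rfl
    have h3 : ∑ i : ZMod 2, (DirectSum.decompose 𝒜 s i : R) = s0 + s1 :=
      Fin.sum_univ_two _
    rw [← h3, h2]
    exact DirectSum.sum_support_decompose 𝒜 s
  have hs1span : s1 ∈ Ideal.span {x : R | x ∈ 𝒜 1} :=
    Ideal.subset_span hs1mem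
  -- s0 is not in the product ideal
  have hs0not : s0 ∉ Ideal.span {x : R | ∃ a ∈ 𝒜 1, ∃ b ∈ 𝒜 1, x = a * b} := by
    intro hmem
    apply hs
    have hle : Ideal.span {x : R | ∃ a ∈ 𝒜 1, ∃ b ∈ 𝒜 1, x = a * b} ≤
        Ideal.span {x : R | x ∈ 𝒜 1} := by
      rw [Ideal.span_le]
      rintro x ⟨a, _, b, hb, rfl⟩
      exact Ideal.mul_mem_left _ a (Ideal.subset_span hb)
    have : s0 ∈ Ideal.span {x : R | x ∈ 𝒜 1} := hle hmem
    have := Ideal.add_mem _ this hs1span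
    rwa [hsum] at this
  -- key computation
  have hkey : s0 * a = -(s1 * a) := by
    have : (s0 + s1) * a = 0 := by rw [hsum]; exact hsa
    rw [add_mul] at this
    exact eq_neg_of_add_eq_zero_left this
  have hz : s0 * (s1 * a) = 0 := by
    rw [← mul_assoc, hc0 s0 s1 hs0mem, mul_assoc, hkey, mul_neg, ← mul_assoc,
      hsq s1 hs1mem, zero_mul, neg_zero]
  have hs1a : s1 * a = 0 := h s0 hs0mem hs0not _ hz
  have hs0a : s0 * a = 0 := by rw [hkey, hs1a, neg_zero]
  exact h s0 hs0mem hs0not a hs0a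
end

section
/- Let A be a super-commutative super-ring. The intersection of all prime super-ideals of A equals the set of nilpotent elements of A, and contains the super-ideal I_A = A·A₁. -/
/-!
Odd elements square to zero, hence anticommute, and even elements are central. So `I = A·A₁` is
a two-sided ideal containing every commutator, and `A ⧸ I` is a commutative ring. Every element
of `I` is `e + o` with `o` odd and `e` a sum of central square-zero products `r₁ s` of odd
elements, so `I` is nil. A non-nilpotent `x` therefore stays non-nilpotent in `A ⧸ I`, is avoided
by some prime of `A ⧸ I`, and the preimage of that prime is a prime super-ideal. Conversely a prime
super-ideal contains every odd `s` because `s * s = 0`, hence contains `I` and all nilpotents.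
-/

open DirectSum

abbrev Ideal.Quotient.commRingOfCommutatorMem {R : Type*} [Ring R] (I : Ideal R) [I.IsTwoSided]
    (h : ∀ a b : R, a * b - b * a ∈ I) : CommRing (R ⧸ I) where
  mul_comm x y := by
    obtain ⟨a, rfl⟩ := Ideal.Quotient.mk_surjective x
    obtain ⟨b, rfl⟩ := Ideal.Quotient.mk_surjective y
    rw [← map_mul, ← map_mul, Ideal.Quotient.eq]
    exact h a b

section SuperCommutative

variable {R : Type*} [Ring R] {𝒜 : ZMod 2 → AddSubgroup R}

variable (𝒜) in
abbrev oddIdeal : Ideal R := Ideal.span {x : R | x ∈ 𝒜 1}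

theorem mul_eq_neg_mul_of_mem_one (hsq : ∀ s : R, s ∈ 𝒜 1 → s * s = 0) {s t : R}
    (hs : s ∈ 𝒜 1) (ht : t ∈ 𝒜 1) : s * t = -(t * s) := by
  have h := hsq (s + t) (add_mem hs ht)
  rw [add_mul, mul_add, mul_add, hsq s hs, hsq t ht, zero_add, add_zero] at h
  exact eq_neg_of_add_eq_zero_left h

theorem oddIdeal_le_of_isPrime (hsq : ∀ s : R, s ∈ 𝒜 1 → s * s = 0) {p : Ideal R}
    (hp : p.IsPrime) : oddIdeal 𝒜 ≤ p :=
  Ideal.span_le.mpr fun s hs => hp.mem_of_pow_mem 2 (by rw [sq, hsq s hs]; exact p.zero_mem)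

variable [GradedRing 𝒜]

variable (𝒜) in
theorem decompose_zero_add_decompose_one (r : R) :
    (decompose 𝒜 r 0 : R) + (decompose 𝒜 r 1 : R) = r := by
  conv_rhs => rw [← (decompose 𝒜).symm_apply_apply r, ← sum_univ_of (decompose 𝒜 r)]
  simp only [decompose_symm_sum, decompose_symm_of]
  exact (Fin.sum_univ_two (fun i => (decompose 𝒜 r i : R))).symm

theorem mul_mem_zero_of_mem_one {a b : R} (ha : a ∈ 𝒜 1) (hb : b ∈ 𝒜 1) : a * b ∈ 𝒜 0 :=
  SetLike.mul_mem_graded ha hb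

theorem isHomogeneous_of_oddIdeal_le {p : Ideal R} (hp : oddIdeal 𝒜 ≤ p) :
    p.IsHomogeneous 𝒜 := by
  have hodd (r : R) : (decompose 𝒜 r 1 : R) ∈ p := hp (Ideal.subset_span (decompose 𝒜 r 1).2)
  intro i r hr
  obtain rfl | rfl : i = 0 ∨ i = 1 := by revert i; decide
  · rw [eq_sub_of_add_eq (decompose_zero_add_decompose_one 𝒜 r)]
    exact sub_mem hr (hodd r)
  · exact hodd r

theorem oddIdeal_isTwoSided (hc0 : ∀ r s : R, r ∈ 𝒜 0 → r * s = s * r)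
    (hsq : ∀ s : R, s ∈ 𝒜 1 → s * s = 0) : (oddIdeal 𝒜).IsTwoSided := by
  refine ⟨fun b ha => ?_⟩
  induction ha using Submodule.span_induction with
  | mem s hs =>
    rw [← decompose_zero_add_decompose_one 𝒜 b, mul_add, ← hc0 _ s (decompose 𝒜 b 0).2,
      mul_eq_neg_mul_of_mem_one hsq hs (decompose 𝒜 b 1).2]
    exact add_mem (Ideal.mul_mem_left _ _ (Ideal.subset_span hs))
      (neg_mem (Ideal.mul_mem_left _ _ (Ideal.subset_span hs)))
  | zero => simp
  | add x y _ _ hx hy => rw [add_mul]; exact add_mem hx hy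
  | smul r x _ hx => rw [smul_eq_mul, mul_assoc]; exact Ideal.mul_mem_left _ _ hx

theorem commutator_mem_oddIdeal (hc0 : ∀ r s : R, r ∈ 𝒜 0 → r * s = s * r)
    (hsq : ∀ s : R, s ∈ 𝒜 1 → s * s = 0) (a b : R) : a * b - b * a ∈ oddIdeal 𝒜 := by
  have := oddIdeal_isTwoSided hc0 hsq
  have ha₁ : (decompose 𝒜 a 1 : R) ∈ oddIdeal 𝒜 := Ideal.subset_span (decompose 𝒜 a 1).2
  have hcomm : a * b - b * a = (decompose 𝒜 a 1 : R) * b - b * (decompose 𝒜 a 1 : R) := by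
    conv_lhs => rw [← decompose_zero_add_decompose_one 𝒜 a]
    rw [add_mul, mul_add, hc0 _ b (decompose 𝒜 a 0).2]
    abel
  rw [hcomm]
  exact sub_mem (Ideal.mul_mem_right _ _ ha₁) (Ideal.mul_mem_left _ _ ha₁)

theorem exists_isNilpotent_add_eq_of_mem_oddIdeal (hc0 : ∀ r s : R, r ∈ 𝒜 0 → r * s = s * r)
    (hsq : ∀ s : R, s ∈ 𝒜 1 → s * s = 0) {x : R} (hx : x ∈ oddIdeal 𝒜) :
    ∃ e ∈ 𝒜 0, IsNilpotent e ∧ ∃ o ∈ 𝒜 1, e + o = x := by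
  induction hx using Submodule.span_induction with
  | mem s hs => exact ⟨0, zero_mem _, .zero, s, hs, zero_add s⟩
  | zero => exact ⟨0, zero_mem _, .zero, 0, zero_mem _, add_zero 0⟩
  | add x y _ _ hx hy =>
    obtain ⟨e, he, he_nil, o, ho, rfl⟩ := hx
    obtain ⟨e', he', he'_nil, o', ho', rfl⟩ := hy
    exact ⟨e + e', add_mem he he', Commute.isNilpotent_add (hc0 e e' he) he_nil he'_nil,
      o + o', add_mem ho ho', add_add_add_comm e e' o o'⟩
  | smul r x _ hx =>
    obtain ⟨e, he, he_nil, o, ho, rfl⟩ := hx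
    set r₀ := (decompose 𝒜 r 0 : R)
    set r₁ := (decompose 𝒜 r 1 : R)
    have hr₀ : r₀ ∈ 𝒜 0 := (decompose 𝒜 r 0).2
    have hr₁ : r₁ ∈ 𝒜 1 := (decompose 𝒜 r 1).2
    have hr₀e : IsNilpotent (r₀ * e) := Commute.isNilpotent_mul_left (hc0 r₀ e hr₀) he_nil
    -- `(r₁ o)² = -r₁ r₁ o o = 0`
    have hr₁o : IsNilpotent (r₁ * o) := ⟨2, by
      rw [sq, mul_assoc, ← mul_assoc o, mul_eq_neg_mul_of_mem_one hsq ho hr₁, neg_mul, mul_assoc,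
        hsq o ho, mul_zero, neg_zero, mul_zero]⟩
    refine ⟨r₀ * e + r₁ * o, add_mem (SetLike.mul_mem_graded hr₀ he)
        (mul_mem_zero_of_mem_one hr₁ ho),
      Commute.isNilpotent_add (hc0 _ _ (SetLike.mul_mem_graded hr₀ he)) hr₀e hr₁o,
      r₀ * o + r₁ * e, add_mem (SetLike.mul_mem_graded hr₀ ho) ?_, ?_⟩
    · simpa using SetLike.mul_mem_graded hr₁ he
    · rw [smul_eq_mul, ← decompose_zero_add_decompose_one 𝒜 r]
      noncomm_ring

theorem isNilpotent_of_mem_oddIdeal (hc0 : ∀ r s : R, r ∈ 𝒜 0 → r * s = s * r)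
    (hsq : ∀ s : R, s ∈ 𝒜 1 → s * s = 0) {x : R} (hx : x ∈ oddIdeal 𝒜) : IsNilpotent x := by
  obtain ⟨e, he, he_nil, o, ho, rfl⟩ := exists_isNilpotent_add_eq_of_mem_oddIdeal hc0 hsq hx
  exact Commute.isNilpotent_add (hc0 e o he) he_nil ⟨2, by rw [sq, hsq o ho]⟩

theorem exists_isPrime_oddIdeal_le_notMem (hc0 : ∀ r s : R, r ∈ 𝒜 0 → r * s = s * r)
    (hsq : ∀ s : R, s ∈ 𝒜 1 → s * s = 0) {x : R} (hx : ¬IsNilpotent x) :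
    ∃ p : Ideal R, p.IsPrime ∧ oddIdeal 𝒜 ≤ p ∧ x ∉ p := by
  have := oddIdeal_isTwoSided hc0 hsq
  let := Ideal.Quotient.commRingOfCommutatorMem (oddIdeal 𝒜) (commutator_mem_oddIdeal hc0 hsq)
  have hx' : ¬IsNilpotent (Ideal.Quotient.mk (oddIdeal 𝒜) x) := by
    rintro ⟨n, hn⟩
    rw [← map_pow, Ideal.Quotient.eq_zero_iff_mem] at hn
    exact hx (isNilpotent_of_mem_oddIdeal hc0 hsq hn).of_pow
  obtain ⟨q, hq, hxq⟩ : ∃ q : Ideal (R ⧸ oddIdeal 𝒜), q.IsPrime ∧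
      Ideal.Quotient.mk (oddIdeal 𝒜) x ∉ q := by
    simpa using mt nilpotent_iff_mem_prime.2 hx'
  refine ⟨q.comap (Ideal.Quotient.mk (oddIdeal 𝒜)), hq.comap _, fun y hy => ?_, hxq⟩
  rw [Ideal.mem_comap, Ideal.Quotient.eq_zero_iff_mem.2 hy]
  exact q.zero_mem

end SuperCommutative

/-- In a super-commutative super-ring `A`, the intersection of
all prime super-ideals equals the set of nilpotent elements, and it contains the
super-ideal `I_A = A·A₁`. -/
theorem inter_prime_superIdeals_eq_nilpotents
    {R : Type*} [Ring R]
    (𝒜 : ZMod 2 → AddSubgroup R) [GradedRing 𝒜]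
    (hc0 : ∀ r s : R, r ∈ 𝒜 0 → r * s = s * r)
    (hsq : ∀ s : R, s ∈ 𝒜 1 → s * s = 0) :
    {x : R | ∀ p : Ideal R, p.IsHomogeneous 𝒜 →
        (p ≠ ⊤ ∧ (∀ a b : R, a * b - b * a ∈ p) ∧
          (∀ a b : R, a * b ∈ p → a ∈ p ∨ b ∈ p)) → x ∈ p} =
      {x : R | IsNilpotent x} ∧
    ∀ x ∈ Ideal.span {x : R | x ∈ 𝒜 1},
      ∀ p : Ideal R, p.IsHomogeneous 𝒜 →
        (p ≠ ⊤ ∧ (∀ a b : R, a * b - b * a ∈ p) ∧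
          (∀ a b : R, a * b ∈ p → a ∈ p ∨ b ∈ p)) → x ∈ p := by
  refine ⟨Set.ext fun x => ⟨fun hx => ?_, fun ⟨n, hn⟩ p _ ⟨hne, _, hprime⟩ => ?_⟩,
    fun x hx p _ ⟨hne, _, hprime⟩ => oddIdeal_le_of_isPrime hsq ⟨hne, hprime _ _⟩ hx⟩
  · by_contra hx_nil
    obtain ⟨p, hp, hIp, hxp⟩ := exists_isPrime_oddIdeal_le_notMem hc0 hsq hx_nil
    exact hxp (hx p (isHomogeneous_of_oddIdeal_le hIp)
      ⟨hp.ne_top, fun a b => hIp (commutator_mem_oddIdeal hc0 hsq a b), fun _ _ => hp.mem_or_mem⟩)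
  · exact Ideal.IsPrime.mem_of_pow_mem ⟨hne, hprime _ _⟩ n (hn ▸ p.zero_mem)
end

section
/- Let K be a field, B = K[X₁,…,Xᵣ] a polynomial algebra contained in the even part A₀ of a finitely generated super-commutative K-superalgebra A with A₀ integral over B, and let y₁,…,yₛ ∈ A₁ be odd elements. If Ann_B(y₁⋯yₛ) = 0 (no nonzero element of B annihilates the product y₁⋯yₛ), then the B-superalgebra map ν from the exterior algebra B[Y₁,…,Yₛ] = Λ_B(Y₁,…,Yₛ) to A defined by ν(Yᵢ) = yᵢ is injective. -/
section Anticommuting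

variable {R : Type*} [Ring R]

theorem AddSubgroup.mul_eq_neg_mul_of_mul_self_eq_zero {S : AddSubgroup R}
    (hsq : ∀ s ∈ S, s * s = 0) {u v : R} (hu : u ∈ S) (hv : v ∈ S) : u * v = -(v * u) := by
  have h := hsq (u + v) (S.add_mem hu hv)
  rw [add_mul, mul_add, mul_add, hsq u hu, hsq v hv, zero_add, add_zero] at h
  exact eq_neg_of_add_eq_zero_left h

variable {ι : Type*} {y : ι → R}

theorem List.prod_map_eq_or_eq_neg_of_perm (hanti : ∀ i j, y i * y j = -(y j * y i))
    {l l' : List ι} (h : l.Perm l') :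
    (l.map y).prod = (l'.map y).prod ∨ (l.map y).prod = -(l'.map y).prod := by
  induction h with
  | nil => exact Or.inl rfl
  | cons x _ ih => rcases ih with ih | ih <;> simp [ih]
  | swap i j l => right; simp only [map_cons, prod_cons, ← mul_assoc, hanti j i, neg_mul]
  | trans _ _ ih₁ ih₂ => rcases ih₁ with h₁ | h₁ <;> rcases ih₂ with h₂ | h₂ <;> simp [h₁, h₂]

theorem List.prod_map_eq_zero_of_not_nodup (hanti : ∀ i j, y i * y j = -(y j * y i))
    (hsq : ∀ i, y i * y i = 0) {l : List ι} (h : ¬ l.Nodup) : (l.map y).prod = 0 := by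
  obtain ⟨i, hii⟩ := not_forall_not.mp (mt nodup_iff_sublist.mpr h)
  obtain ⟨l', hl'⟩ := hii.exists_perm_append
  have hzero : (([i, i] ++ l').map y).prod = 0 := by
    simp [← mul_assoc, hsq i]
  rcases prod_map_eq_or_eq_neg_of_perm hanti hl' with hl | hl <;> simp only [hl, hzero, neg_zero]

variable [LinearOrder ι]

/-- The monomial `y^I`. -/
def orderedProd (y : ι → R) (I : Finset ι) : R := ((I.sort (· ≤ ·)).map y).prod

theorem orderedProd_mul_orderedProd_eq_zero (hanti : ∀ i j, y i * y j = -(y j * y i))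
    (hsq : ∀ i, y i * y i = 0) {I J : Finset ι} (h : ¬ Disjoint I J) :
    orderedProd y I * orderedProd y J = 0 := by
  rw [orderedProd, orderedProd, ← List.prod_append, ← List.map_append]
  refine List.prod_map_eq_zero_of_not_nodup hanti hsq fun hnd => h ?_
  rw [Finset.disjoint_left]
  intro i hI hJ
  exact List.disjoint_of_nodup_append hnd (by simpa using hI) (by simpa using hJ)

theorem orderedProd_union_eq_or_eq_neg (hanti : ∀ i j, y i * y j = -(y j * y i))
    {I J : Finset ι} (h : Disjoint I J) :
    orderedProd y (I ∪ J) = orderedProd y I * orderedProd y J ∨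
      orderedProd y (I ∪ J) = -(orderedProd y I * orderedProd y J) := by
  rw [orderedProd, orderedProd, orderedProd, ← List.prod_append, ← List.map_append]
  refine List.prod_map_eq_or_eq_neg_of_perm hanti (List.perm_of_nodup_nodup_toFinset_eq
    (Finset.sort_nodup _ _) ?_ (by ext; simp))
  exact (Finset.sort_nodup _ _).append (Finset.sort_nodup _ _)
    fun i hI hJ => Finset.disjoint_left.mp h (by simpa using hI) (by simpa using hJ)

variable [Fintype ι]

theorem orderedProd_mul_orderedProd_compl_eq_zero_iff (hanti : ∀ i j, y i * y j = -(y j * y i))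
    (c : R) (I : Finset ι) :
    c * orderedProd y I * orderedProd y Iᶜ = 0 ↔ c * orderedProd y Finset.univ = 0 := by
  rw [mul_assoc]
  rcases orderedProd_union_eq_or_eq_neg hanti (disjoint_compl_right (a := I)) with h | h <;>
    rw [Finset.union_compl] at h <;> simp [h]

/-- Multiplying a relation `∑ a_J y^J = 0` by `y^Iᶜ` kills every term with `J ⊄ I`, so by
induction on `I` each `a_I` annihilates `y^univ`. -/
theorem eq_zero_of_sum_mul_orderedProd_eq_zero (hanti : ∀ i j, y i * y j = -(y j * y i))
    (hsq : ∀ i, y i * y i = 0) {a : Finset ι → R}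
    (hann : ∀ I, a I * orderedProd y Finset.univ = 0 → a I = 0)
    (h : ∑ I, a I * orderedProd y I = 0) (I : Finset ι) : a I = 0 := by
  induction I using Finset.strongInduction with
  | H I ih =>
  refine hann I ((orderedProd_mul_orderedProd_compl_eq_zero_iff hanti _ I).mp ?_)
  rw [← Finset.sum_eq_single I (f := fun J => a J * orderedProd y J * orderedProd y Iᶜ)
    (fun J _ hJI => ?_) (absurd (Finset.mem_univ I)), ← Finset.sum_mul, h, zero_mul]
  by_cases hJ : J ⊆ I
  · rw [ih J (hJ.ssubset_of_ne hJI), zero_mul, zero_mul]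
  · rw [mul_assoc, orderedProd_mul_orderedProd_eq_zero hanti hsq, mul_zero]
    rwa [disjoint_compl_right_iff]

end Anticommuting

theorem superNoetherNormalization_injective_general
    {K : Type*} [Field K] {R : Type*} [Ring R]
    (𝒜 : ZMod 2 → AddSubgroup R)
    (hsq : ∀ s : R, s ∈ 𝒜 1 → s * s = 0)
    (r s : ℕ) (φ : MvPolynomial (Fin r) K →+* R)
    (y : Fin s → R) (hy : ∀ i, y i ∈ 𝒜 1)
    (hann : ∀ b, φ b * (List.ofFn y).prod = 0 → b = 0) :
    ∀ a : Finset (Fin s) → MvPolynomial (Fin r) K,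
      (∑ I : Finset (Fin s), φ (a I) * ((I.sort (· ≤ ·)).map y).prod) = 0 →
      ∀ I, a I = 0 := by
  intro a h I
  have hanti : ∀ i j, y i * y j = -(y j * y i) := fun i j =>
    (𝒜 1).mul_eq_neg_mul_of_mul_self_eq_zero hsq (hy i) (hy j)
  have hprod_univ : orderedProd y Finset.univ = (List.ofFn y).prod := by
    rw [orderedProd, Fin.sort_univ, List.ofFn_eq_map]
  have hann' : ∀ b, φ b * orderedProd y Finset.univ = 0 → b = 0 := hprod_univ ▸ hann
  have hφa : φ (a I) = 0 :=
    eq_zero_of_sum_mul_orderedProd_eq_zero hanti (fun i => hsq _ (hy i))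
      (a := fun I => φ (a I)) (fun I hI => by rw [hann' _ hI, map_zero]) h I
  exact hann' _ (by rw [hφa, zero_mul])

/-- **super Noether normalization, injectivity.** Let `A` be a
finitely generated super-commutative superalgebra over a field `K`,
`B = K[X₁,…,Xᵣ]` a polynomial subalgebra of `A₀` (given by an injective ring
homomorphism `φ` with image in `𝒜 0`) over which `A₀` is integral, and
`y₁,…,yₛ` odd elements.  If no nonzero element of `B` annihilates `y₁⋯yₛ`, then
the `B`-superalgebra map `ν : Λ_B(Y₁,…,Yₛ) → A`, `ν(Yᵢ) = yᵢ`, is injective;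
equivalently, the monomials `y^I`, `I ⊆ {1,…,s}`, are linearly independent
over `B`. -/
theorem superNoetherNormalization_injective
    {K : Type*} [Field K] {R : Type*} [Ring R] [Algebra K R]
    [Algebra.FiniteType K R]
    (𝒜 : ZMod 2 → AddSubgroup R) [GradedRing 𝒜]
    (hc0 : ∀ r s : R, r ∈ 𝒜 0 → r * s = s * r)
    (hsq : ∀ s : R, s ∈ 𝒜 1 → s * s = 0)
    (r s : ℕ) (φ : MvPolynomial (Fin r) K →+* R)
    (hφinj : Function.Injective φ)
    (hφ0 : ∀ b, φ b ∈ 𝒜 0)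
    (hint : ∀ a ∈ 𝒜 0, φ.IsIntegralElem a)
    (y : Fin s → R) (hy : ∀ i, y i ∈ 𝒜 1)
    (hann : ∀ b, φ b * (List.ofFn y).prod = 0 → b = 0) :
    ∀ a : Finset (Fin s) → MvPolynomial (Fin r) K,
      (∑ I : Finset (Fin s), φ (a I) * ((I.sort (· ≤ ·)).map y).prod) = 0 →
      ∀ I, a I = 0 :=
  superNoetherNormalization_injective_general 𝒜 hsq r s φ y hy hann
end

section
/- Let R be a Noetherian super-commutative super-ring of Krull super-dimension r|s, and let y ∈ R₁ be an odd element contained in some system of odd parameters of the maximal length s. Then the odd Krull dimension of R/Ry is at least s − 1. -/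
/-!
Remove `y = zᵢ` from a system of odd parameters `z` of `R` and write `w` for the rest. Since
`y b y = 0` for every `b` (split `b` into even and odd parts), `y` annihilates `Ry` from the left,
so `a • ∏ w ∈ Ry` forces `a • y ∏ w = 0`, and `y ∏ w = ±∏ z`. Hence
`Ann(1 mod Ry) ≤ Ann(∏ w mod Ry) ≤ Ann(∏ z)`, and the Krull dimensions of the corresponding
quotients of `R₀` are squeezed between `Kdim(R₀/Ann(∏ z)) = Kdim R₀` and `Kdim R₀`, so `w` is a
system of odd parameters of `R/Ry`. The supremum is that of a bounded set: products of odd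
elements factor through the exterior algebra of `R₁`, so products of more odd elements than
generators of `R₁` vanish.
-/

/-- The product `z₁ ⋯ z_l` of a family of (odd) elements, in order. -/
noncomputable def oddProd {R : Type*} [Ring R] {l : ℕ} (z : Fin l → R) : R :=
  (List.ofFn z).prod

/-- The two-sided ideal `R·x·R` generated by `x`. -/
def twoSidedSpan {R : Type*} [Ring R] (x : R) : Ideal R :=
  Ideal.span {w : R | ∃ a b : R, w = a * x * b}

/-- `z₁,…,z_t` (odd elements of `R`) is a system of odd parameters of the
quotient super-ring `R/Ry`:  `Kdim(B₀/Ann(z₁⋯z_t mod Ry)) = Kdim((R/Ry)₀)`,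
where `(R/Ry)₀ = R₀/(Ry ∩ R₀)` has Krull dimension
`Kdim (R₀ ⧸ torsionOf (1 mod Ry))`. -/
def IsSOPModulo {R₀ R : Type*} [CommRing R₀] [Ring R] [Algebra R₀ R]
    (𝒜 : ZMod 2 → Submodule R₀ R) (y : R) {t : ℕ} (z : Fin t → R) : Prop :=
  (∀ i, z i ∈ 𝒜 1) ∧
    ringKrullDim (R₀ ⧸ Ideal.torsionOf R₀ (R ⧸ twoSidedSpan y)
        (Submodule.Quotient.mk (oddProd z))) =
      ringKrullDim (R₀ ⧸ Ideal.torsionOf R₀ (R ⧸ twoSidedSpan y)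
        (Submodule.Quotient.mk 1))

lemma ringKrullDim_quotient_eq_of_le {A : Type*} [CommRing A] {I J : Ideal A} (h : I ≤ J)
    (hJ : ringKrullDim (A ⧸ J) = ringKrullDim A) : ringKrullDim (A ⧸ I) = ringKrullDim A :=
  le_antisymm (ringKrullDim_quotient_le I) <| hJ ▸
    ringKrullDim_le_of_surjective (Ideal.Quotient.factor h) (Ideal.Quotient.factor_surjective h)

lemma Ideal.torsionOf_neg {A M : Type*} [CommRing A] [AddCommGroup M] [Module A M] (x : M) :
    torsionOf A M (-x) = torsionOf A M x := by
  ext a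
  simp only [mem_torsionOf_iff, smul_neg, neg_eq_zero]

lemma Ideal.torsionOf_neg_one_pow_smul {A M : Type*} [CommRing A] [AddCommGroup M] [Module A M]
    (k : ℕ) (x : M) : torsionOf A M ((-1 : ℤ) ^ k • x) = torsionOf A M x := by
  rcases neg_one_pow_eq_or ℤ k with h | h <;> simp [h, torsionOf_neg]

section TorsionOfQuotient

variable {R₀ R : Type*} [CommRing R₀] [Ring R] [Algebra R₀ R]

open Ideal Submodule.Quotient

lemma torsionOf_mk_one_le_torsionOf_mk (I : Ideal R) (x : R) :
    torsionOf R₀ (R ⧸ I) (mk 1) ≤ torsionOf R₀ (R ⧸ I) (mk x) := by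
  intro a ha
  rw [mem_torsionOf_iff, ← mk_smul, Submodule.Quotient.mk_eq_zero] at ha ⊢
  simpa [mul_smul_comm] using I.mul_mem_left x ha

lemma torsionOf_mk_le_torsionOf_mul {I : Ideal R} {y : R} (hy : ∀ x ∈ I, y * x = 0) (x : R) :
    torsionOf R₀ (R ⧸ I) (mk x) ≤ torsionOf R₀ R (y * x) := by
  intro a ha
  rw [mem_torsionOf_iff, ← mk_smul, Submodule.Quotient.mk_eq_zero] at ha
  rw [mem_torsionOf_iff, ← mul_smul_comm, hy _ ha]

end TorsionOfQuotient

lemma mul_eq_zero_of_mem_twoSidedSpan {R : Type*} [Ring R] {y x : R}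
    (hy : ∀ b, y * b * y = 0) (hx : x ∈ twoSidedSpan y) : y * x = 0 := by
  suffices ∀ c, y * c * x = 0 by simpa using this 1
  induction hx using Submodule.span_induction with
  | mem w hw =>
    obtain ⟨a, b, rfl⟩ := hw
    intro c
    rw [← mul_assoc, ← mul_assoc, mul_assoc y, hy, zero_mul]
  | zero => simp
  | add u v _ _ hu hv => intro c; rw [mul_add, hu, hv, add_zero]
  | smul r u _ hu => intro c; rw [smul_eq_mul, ← mul_assoc, mul_assoc y, hu]

section OddProd

variable {R₀ R : Type*} [CommRing R₀] [Ring R] [Algebra R₀ R]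

open ExteriorAlgebra

def oddProdAlternating (M : Submodule R₀ R) (hM : ∀ a ∈ M, a * a = 0) (n : ℕ) :
    M [⋀^Fin n]→ₗ[R₀] R :=
  (lift R₀ ⟨M.subtype, fun m => hM m m.2⟩).toLinearMap.compAlternatingMap (ιMulti R₀ n)

lemma oddProdAlternating_apply (M : Submodule R₀ R) (hM : ∀ a ∈ M, a * a = 0) {n : ℕ}
    (v : Fin n → M) : oddProdAlternating M hM n v = oddProd fun i => (v i : R) := by
  simp only [oddProdAlternating, oddProd, LinearMap.compAlternatingMap_apply, ιMulti_apply,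
    AlgHom.toLinearMap_apply, map_list_prod, List.map_ofFn, Function.comp_def]
  congr
  funext i
  exact lift_ι_apply R₀ _ _ _

lemma oddProd_insertNth {M : Submodule R₀ R} (hM : ∀ a ∈ M, a * a = 0) {n : ℕ} (p : Fin (n + 1))
    {y : R} (hy : y ∈ M) {w : Fin n → R} (hw : ∀ i, w i ∈ M) :
    oddProd (p.insertNth y w) = (-1 : ℤ) ^ (p : ℕ) • (y * oddProd w) := by
  have h := (oddProdAlternating M hM (n + 1)).map_insertNth p ⟨y, hy⟩ fun i => ⟨w i, hw i⟩
  simp only [oddProdAlternating_apply] at h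
  convert h using 2
  · ext i; cases i using p.succAboveCases <;> simp
  · simp only [oddProd, List.ofFn_succ, Matrix.cons_val_zero, Matrix.cons_val_succ,
      List.prod_cons]

lemma oddProd_eq_zero_of_lt {M : Submodule R₀ R} (hM : ∀ a ∈ M, a * a = 0) {n : ℕ}
    {v : Fin n → M} (hv : Submodule.span R₀ (Set.range v) = ⊤) {t : ℕ} (hnt : n < t)
    {z : Fin t → R} (hz : ∀ i, z i ∈ M) : oddProd z = 0 := by
  have hzero : ⋀[R₀]^t M = ⊥ := by
    rw [← exteriorPower.ιMulti_family_span_fixedDegree_of_span R₀ hv, Submodule.span_eq_bot]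
    rintro - ⟨s, -⟩
    have := (s : Finset (Fin n)).card_le_univ
    rw [Set.powersetCard.card_eq, Fintype.card_fin] at this
    omega
  let u : Fin t → M := fun i => ⟨z i, hz i⟩
  have hu : ιMulti R₀ t u = 0 := by
    simpa [hzero] using ιMulti_range R₀ t (Set.mem_range_self u)
  simpa [oddProdAlternating, hu] using (oddProdAlternating_apply M hM u).symm

end OddProd

section Super

variable {R₀ R : Type*} [CommRing R₀] [Ring R] [Algebra R₀ R] (𝒜 : ZMod 2 → Submodule R₀ R)

def IsSOP {t : ℕ} (z : Fin t → R) : Prop :=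
  (∀ i, z i ∈ 𝒜 1) ∧ ringKrullDim (R₀ ⧸ Ideal.torsionOf R₀ R (oddProd z)) = ringKrullDim R₀

variable {𝒜}

lemma sSup_setOf_isSOP_eq_zero [Subsingleton R₀] :
    sSup {t : ℕ | ∃ z : Fin t → R, IsSOP 𝒜 z} = 0 := by
  convert Set.Infinite.Nat.sSup_eq_zero Set.infinite_univ
  refine Set.eq_univ_of_forall fun t => ⟨0, fun _ => zero_mem _, ?_⟩
  simp only [ringKrullDim_eq_bot_of_subsingleton]

lemma mul_mul_eq_zero_of_odd [GradedAlgebra 𝒜] (h0 : 𝒜 0 = 1)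
    (hsq : ∀ a ∈ 𝒜 1, a * a = 0) {y : R} (hy : y ∈ 𝒜 1) (b : R) : y * b * y = 0 := by
  induction b using DirectSum.Decomposition.inductionOn 𝒜 with
  | zero => simp
  | homogeneous b =>
    obtain ⟨b, hb⟩ := b
    rename_i i
    change y * b * y = 0
    rcases (by decide : ∀ j : ZMod 2, j = 0 ∨ j = 1) i with rfl | rfl
    · rw [h0] at hb
      obtain ⟨c, rfl⟩ := Submodule.mem_one.mp hb
      rw [← Algebra.commutes, mul_assoc, hsq y hy, mul_zero]
    · have hsum := hsq (y + b) (add_mem hy hb)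
      rw [mul_add, add_mul, add_mul, hsq y hy, hsq b hb, zero_add, add_zero] at hsum
      rw [eq_neg_of_add_eq_zero_right hsum, neg_mul, mul_assoc, hsq y hy, mul_zero, neg_zero]
  | add b b' hb hb' => rw [mul_add, add_mul, hb, hb', add_zero]

lemma torsionOf_mk_oddProd_removeNth_le [GradedAlgebra 𝒜] (h0 : 𝒜 0 = 1)
    (hsq : ∀ a ∈ 𝒜 1, a * a = 0) {m : ℕ} {z : Fin (m + 1) → R} (hz : ∀ j, z j ∈ 𝒜 1)
    (i : Fin (m + 1)) :
    Ideal.torsionOf R₀ (R ⧸ twoSidedSpan (z i)) (Submodule.Quotient.mk (oddProd (i.removeNth z)))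
      ≤ Ideal.torsionOf R₀ R (oddProd z) := by
  have hz' : oddProd z = (-1 : ℤ) ^ (i : ℕ) • (z i * oddProd (i.removeNth z)) := by
    rw [← oddProd_insertNth hsq i (hz i) (w := i.removeNth z) fun j => hz _,
      Fin.insertNth_self_removeNth]
  rw [hz', Ideal.torsionOf_neg_one_pow_smul]
  exact torsionOf_mk_le_torsionOf_mul
    (fun x => mul_eq_zero_of_mem_twoSidedSpan (mul_mul_eq_zero_of_odd h0 hsq (hz i))) _

lemma IsSOP.ringKrullDim_quotient_torsionOf_mk_one [GradedAlgebra 𝒜] (h0 : 𝒜 0 = 1)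
    (hsq : ∀ a ∈ 𝒜 1, a * a = 0) {m : ℕ} {z : Fin (m + 1) → R} (hz : IsSOP 𝒜 z)
    (i : Fin (m + 1)) :
    ringKrullDim (R₀ ⧸ Ideal.torsionOf R₀ (R ⧸ twoSidedSpan (z i)) (Submodule.Quotient.mk 1)) =
      ringKrullDim R₀ :=
  ringKrullDim_quotient_eq_of_le ((torsionOf_mk_one_le_torsionOf_mk _ _).trans
    (torsionOf_mk_oddProd_removeNth_le h0 hsq hz.1 i)) hz.2

lemma IsSOP.isSOPModulo_removeNth [GradedAlgebra 𝒜] (h0 : 𝒜 0 = 1)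
    (hsq : ∀ a ∈ 𝒜 1, a * a = 0) {m : ℕ} {z : Fin (m + 1) → R} (hz : IsSOP 𝒜 z)
    (i : Fin (m + 1)) : IsSOPModulo 𝒜 (z i) (i.removeNth z) :=
  ⟨fun _ => hz.1 _, (ringKrullDim_quotient_eq_of_le
    (torsionOf_mk_oddProd_removeNth_le h0 hsq hz.1 i) hz.2).trans
      (hz.ringKrullDim_quotient_torsionOf_mk_one h0 hsq i).symm⟩

lemma bddAbove_setOf_isSOPModulo [Module.Finite R₀ (𝒜 1)] (hsq : ∀ a ∈ 𝒜 1, a * a = 0) {y : R}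
    (hy : ringKrullDim (R₀ ⧸ Ideal.torsionOf R₀ (R ⧸ twoSidedSpan y) (Submodule.Quotient.mk 1))
      ≠ ⊥) :
    BddAbove {t : ℕ | ∃ z : Fin t → R, IsSOPModulo 𝒜 y z} := by
  obtain ⟨n, v, hv⟩ := Module.Finite.exists_fin (R := R₀) (M := 𝒜 1)
  refine ⟨n, fun t ⟨z, hz, hdim⟩ => ?_⟩
  by_contra! hnt
  rw [oddProd_eq_zero_of_lt hsq hv hnt hz, Submodule.Quotient.mk_zero, Ideal.torsionOf_zero]
    at hdim
  exact hy (hdim ▸ ringKrullDim_eq_bot_of_subsingleton)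

end Super

theorem odd_dim_quotient_ge_general
    {R₀ R : Type*} [CommRing R₀] [Ring R] [Algebra R₀ R]
    (𝒜 : ZMod 2 → Submodule R₀ R) [GradedAlgebra 𝒜]
    (h0 : 𝒜 0 = 1)
    (hsq : ∀ a ∈ 𝒜 1, a * a = 0)
    [Module.Finite R₀ (𝒜 1)]
    (s : ℕ)
    (hs : sSup {t : ℕ | ∃ z : Fin t → R, (∀ i, z i ∈ 𝒜 1) ∧
      ringKrullDim (R₀ ⧸ Ideal.torsionOf R₀ R (oddProd z)) = ringKrullDim R₀} = s)
    (y : R)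
    (hcontained : ∃ z : Fin s → R, (∀ i, z i ∈ 𝒜 1) ∧
      ringKrullDim (R₀ ⧸ Ideal.torsionOf R₀ R (oddProd z)) = ringKrullDim R₀ ∧
      ∃ i, z i = y) :
    s - 1 ≤ sSup {t : ℕ | ∃ z : Fin t → R, IsSOPModulo 𝒜 y z} := by
  obtain ⟨z, hzodd, hzdim, i, rfl⟩ := hcontained
  have hz : IsSOP 𝒜 z := ⟨hzodd, hzdim⟩
  obtain ⟨m, rfl⟩ := Nat.exists_eq_add_one_of_ne_zero i.pos.ne'
  have : Nontrivial R₀ := by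
    by_contra! h
    exact m.succ_ne_zero (hs.symm.trans sSup_setOf_isSOP_eq_zero)
  have hbdd := bddAbove_setOf_isSOPModulo hsq <|
    (hz.ringKrullDim_quotient_torsionOf_mk_one h0 hsq i).trans_ne <|
      ne_bot_of_le_ne_bot WithBot.zero_ne_bot ringKrullDim_nonneg_of_nontrivial
  rw [Nat.add_sub_cancel]
  exact le_csSup hbdd ⟨_, hz.isSOPModulo_removeNth h0 hsq i⟩

/-- Let `R` be a Noetherian super-commutative super-ring of
Krull super-dimension `r|s` and `y` an odd element contained in some system of
odd parameters of maximal length `s`.  Then the odd Krull dimension of `R/Ry`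
is at least `s - 1`. -/
theorem odd_dim_quotient_ge
    {R₀ R : Type*} [CommRing R₀] [Ring R] [Algebra R₀ R]
    (𝒜 : ZMod 2 → Submodule R₀ R) [GradedAlgebra 𝒜]
    (h0 : 𝒜 0 = 1) (hinj : Function.Injective (algebraMap R₀ R))
    (hsq : ∀ a ∈ 𝒜 1, a * a = 0)
    [IsNoetherianRing R₀] [Module.Finite R₀ (𝒜 1)]
    (r : WithBot ℕ∞) (s : ℕ)
    (hr : ringKrullDim R₀ = r) (hrtop : r ≠ ⊤)
    (hs : sSup {t : ℕ | ∃ z : Fin t → R, (∀ i, z i ∈ 𝒜 1) ∧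
      ringKrullDim (R₀ ⧸ Ideal.torsionOf R₀ R (oddProd z)) = ringKrullDim R₀} = s)
    (y : R) (hy : y ∈ 𝒜 1)
    (hcontained : ∃ z : Fin s → R, (∀ i, z i ∈ 𝒜 1) ∧
      ringKrullDim (R₀ ⧸ Ideal.torsionOf R₀ R (oddProd z)) = ringKrullDim R₀ ∧
      ∃ i, z i = y) :
    s - 1 ≤ sSup {t : ℕ | ∃ z : Fin t → R, IsSOPModulo 𝒜 y z} :=
  odd_dim_quotient_ge_general 𝒜 h0 hsq s hs y hcontained
end

section
/- Let K be a field, A = Λ_K(Y₁,…,Yₛ) the exterior (Grassmann) algebra on s odd generators, and f = Σ_L c_L Y^L a nonzero element of the augmentation ideal (c_∅ = 0). Let L₁,…,L_t be the minimal elements of Exp(f) = {L : c_L ≠ 0} under inclusion, and let k = ind(f) be the minimal cardinality of a subset K ⊆ {1,…,s} meeting every Lᵢ. Then for an extremal set K of f, the monomial Y^{{1,…,s}\K} does not lie in the ideal Af; consequently Ksdim₁(A/Af) ≥ s − ind(f). -/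
/-!
The algebra endomorphism of `Λ_K(Y₁,…,Yₛ)` induced by the linear map sending `Yᵢ` to `0` for
`i ∈ E` and fixing the other generators kills every monomial `Y^L` with `L ∩ E ≠ ∅` and fixes
every other one. Each `L` with `c_L ≠ 0` contains a basement set, which meets `E`, so the
endomorphism kills `f`, hence the whole ideal generated by `f`; but it fixes the monomial
`Y^{{1,…,s}∖E}`, which is a basis vector of `Λ` and in particular nonzero.
-/

open ExteriorAlgebra

/-- The monomial `Y^L = ∏_{i ∈ L} Yᵢ` in the exterior algebra `Λ_K(Y₁,…,Yₛ)`,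
the product being taken in increasing order of indices. -/
noncomputable def Ymon (K : Type*) [Field K] (s : ℕ) (L : Finset (Fin s)) :
    ExteriorAlgebra K (Fin s → K) :=
  ((L.sort (· ≤ ·)).map (fun i => ι K (Pi.single i (1 : K)))).prod

/-- The two-sided ideal `AfA` generated by `f`. -/
def idealOf {A : Type*} [Ring A] (f : A) : Ideal A :=
  Ideal.span {x : A | ∃ a b : A, x = a * f * b}

/-- `L` belongs to the basement of `f = Σ c_L Y^L`: it is a minimal element of
`Exp(f) = {L | c_L ≠ 0}`. -/
def InBasement {K : Type*} [Field K] {s : ℕ}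
    (c : Finset (Fin s) → K) (L : Finset (Fin s)) : Prop :=
  c L ≠ 0 ∧ ∀ L', c L' ≠ 0 → L' ⊆ L → L' = L

section EraseCoords

variable {R ι : Type*} [CommSemiring R] [DecidableEq ι]

def eraseCoords (E : Finset ι) : (ι → R) →ₗ[R] (ι → R) :=
  LinearMap.pi fun i => if i ∈ E then 0 else LinearMap.proj i

lemma eraseCoords_single (E : Finset ι) (j : ι) (a : R) :
    eraseCoords E (Pi.single j a) = if j ∈ E then 0 else Pi.single j a := by
  ext i
  simp only [eraseCoords, LinearMap.pi_apply]
  rcases eq_or_ne i j with rfl | hij <;> split_ifs <;> simp_all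

end EraseCoords

lemma map_eq_zero_of_mem_idealOf {A B F : Type*} [Ring A] [Ring B] [FunLike F A B]
    [RingHomClass F A B] (φ : F) {f x : A} (hf : φ f = 0) (hx : x ∈ idealOf f) : φ x = 0 := by
  induction hx using Submodule.span_induction with
  | mem y hy => obtain ⟨a, b, rfl⟩ := hy; simp [hf]
  | zero => exact map_zero φ
  | add _ _ _ _ hy hz => rw [map_add, hy, hz, add_zero]
  | smul _ _ _ hy => rw [smul_eq_mul, map_mul, hy, mul_zero]

section Monomials

variable {K : Type*} [Field K] {s : ℕ}

lemma Ymon_eq_ιMulti (L : Finset (Fin s)) :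
    Ymon K s L = ιMulti K L.card (fun i => Pi.single (L.orderEmbOfFin rfl i) (1 : K)) := by
  rw [ιMulti_apply, Ymon]
  congr 1
  apply List.ext_getElem <;> simp [Finset.orderEmbOfFin_apply]

lemma Ymon_eq_basis (L : Finset (Fin s)) :
    Ymon K s L = (Pi.basisFun K (Fin s)).ExteriorAlgebra L := by
  rw [ExteriorAlgebra.basis_apply_ofCard _ rfl, Ymon_eq_ιMulti]
  congr with i : 1
  simp [Set.powersetCard.ofFinEmbEquiv_symm_apply]

lemma Ymon_ne_zero (L : Finset (Fin s)) : Ymon K s L ≠ 0 :=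
  Ymon_eq_basis (K := K) L ▸ Module.Basis.ne_zero _ L

lemma map_Ymon_of_forall_eq (φ : (Fin s → K) →ₗ[K] (Fin s → K)) {L : Finset (Fin s)}
    (hφ : ∀ i ∈ L, φ (Pi.single i 1) = Pi.single i 1) :
    ExteriorAlgebra.map φ (Ymon K s L) = Ymon K s L := by
  rw [Ymon_eq_ιMulti, map_apply_ιMulti]
  congr with i : 1
  exact hφ _ (L.orderEmbOfFin_mem rfl i)

lemma map_Ymon_of_exists_eq_zero (φ : (Fin s → K) →ₗ[K] (Fin s → K)) {L : Finset (Fin s)}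
    (hφ : ∃ i ∈ L, φ (Pi.single i 1) = 0) :
    ExteriorAlgebra.map φ (Ymon K s L) = 0 := by
  obtain ⟨i, hi, hφi⟩ := hφ
  obtain ⟨k, rfl⟩ : i ∈ Set.range (L.orderEmbOfFin rfl) := by simpa using hi
  rw [Ymon_eq_ιMulti, map_apply_ιMulti]
  exact (ιMulti K L.card).map_coord_zero k hφi

lemma map_eraseCoords_Ymon_of_disjoint {E L : Finset (Fin s)} (h : Disjoint L E) :
    ExteriorAlgebra.map (eraseCoords E) (Ymon K s L) = Ymon K s L :=
  map_Ymon_of_forall_eq _ fun _ hi => by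
    rw [eraseCoords_single, if_neg (Finset.disjoint_left.mp h hi)]

lemma map_eraseCoords_Ymon_of_inter_nonempty {E L : Finset (Fin s)} (h : (L ∩ E).Nonempty) :
    ExteriorAlgebra.map (eraseCoords E) (Ymon K s L) = 0 := by
  obtain ⟨i, hi⟩ := h
  rw [Finset.mem_inter] at hi
  exact map_Ymon_of_exists_eq_zero _ ⟨i, hi.1, by rw [eraseCoords_single, if_pos hi.2]⟩

lemma exists_inBasement_subset (c : Finset (Fin s) → K) {L : Finset (Fin s)} (hL : c L ≠ 0) :
    ∃ L' ⊆ L, InBasement c L' := by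
  obtain ⟨L', hL'L, hmin⟩ := exists_minimal_le_of_wellFoundedLT (fun L => c L ≠ 0) L hL
  exact ⟨L', hL'L, hmin.1, fun _ h h' => le_antisymm h' (hmin.2 h h')⟩

lemma map_eraseCoords_sum_eq_zero (c : Finset (Fin s) → K) {E : Finset (Fin s)}
    (hE : ∀ L, InBasement c L → (L ∩ E).Nonempty) :
    ExteriorAlgebra.map (eraseCoords E) (∑ L, c L • Ymon K s L) = 0 := by
  rw [map_sum]
  refine Finset.sum_eq_zero fun L _ => ?_
  by_cases hL : c L = 0
  · rw [hL, zero_smul, map_zero]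
  obtain ⟨L', hL'L, hL'⟩ := exists_inBasement_subset c hL
  have hLE : (L ∩ E).Nonempty := (hE L' hL').mono (Finset.inter_subset_inter_right hL'L)
  rw [map_smul, map_eraseCoords_Ymon_of_inter_nonempty hLE, smul_zero]

end Monomials

theorem odd_dim_one_relation_ge_general
    {K : Type*} [Field K] (s : ℕ) (c : Finset (Fin s) → K)
    (f : ExteriorAlgebra K (Fin s → K))
    (hf : f = ∑ L : Finset (Fin s), c L • Ymon K s L)
    (E : Finset (Fin s))
    (hE : ∀ L : Finset (Fin s), InBasement c L → (L ∩ E).Nonempty) :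
    Ymon K s (Finset.univ \ E) ∉ idealOf f ∧
    s - E.card ≤ sSup {n : ℕ | ∃ L : Finset (Fin s),
      L.card = n ∧ Ymon K s L ∉ idealOf f} := by
  have hkill : ExteriorAlgebra.map (eraseCoords E) f = 0 := hf ▸ map_eraseCoords_sum_eq_zero c hE
  have hnotMem : Ymon K s (Finset.univ \ E) ∉ idealOf f := fun hmem => by
    apply Ymon_ne_zero (K := K) (Finset.univ \ E)
    rw [← map_eraseCoords_Ymon_of_disjoint Finset.sdiff_disjoint]
    exact map_eq_zero_of_mem_idealOf _ hkill hmem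
  refine ⟨hnotMem, le_csSup ⟨s, ?_⟩ ⟨Finset.univ \ E, ?_, hnotMem⟩⟩
  · rintro _ ⟨L, rfl, -⟩
    simpa using L.card_le_univ
  · simp [Finset.card_sdiff]

/-- Let `f = Σ_L c_L Y^L ∈ Λ_K(Y₁,…,Yₛ)` be nonzero with
`c_∅ = 0`, and let `E` be an extremal set of `f` (a subset of minimal
cardinality meeting every element of the basement of `f`).  Then
`Y^{{1,…,s}∖E} ∉ Af`; consequently
`Ksdim₁(A/Af) = max{|L| : Y^L ∉ Af} ≥ s - ind(f)`. -/
theorem odd_dim_one_relation_ge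
    {K : Type*} [Field K] (s : ℕ) (c : Finset (Fin s) → K) (hc0 : c ∅ = 0)
    (f : ExteriorAlgebra K (Fin s → K))
    (hf : f = ∑ L : Finset (Fin s), c L • Ymon K s L) (hfne : f ≠ 0)
    (E : Finset (Fin s))
    (hE : ∀ L : Finset (Fin s), InBasement c L → (L ∩ E).Nonempty)
    (hEmin : ∀ E' : Finset (Fin s),
      (∀ L : Finset (Fin s), InBasement c L → (L ∩ E').Nonempty) →
      E.card ≤ E'.card) :
    Ymon K s (Finset.univ \ E) ∉ idealOf f ∧
    s - E.card ≤ sSup {n : ℕ | ∃ L : Finset (Fin s),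
      L.card = n ∧ Ymon K s L ∉ idealOf f} :=
  odd_dim_one_relation_ge_general s c f hf E hE
end

section
/- Let (A, m) be a local Noetherian super-commutative super-ring with residue field K = A/m, and suppose z₁,…,z_t ∈ A₁ give rise to a K-basis of A₁/m₀A₁ (equivalently, form a minimal generating set of the A₀-module A₁). Then any system of odd parameters has cardinality at most t; in particular Ksdim₁(A) ≤ dim_K((m/m²)₁). -/
section Aux

variable {R₀ R : Type*} [CommRing R₀] [Ring R] [Algebra R₀ R]

lemma oddProd_nil (z : Fin 0 → R) : oddProd z = 1 := by
  simp [oddProd]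

lemma oddProd_succ {l : ℕ} (z : Fin (l + 1) → R) :
    oddProd z = z 0 * oddProd (z ∘ Fin.succ) := by
  simp only [oddProd, List.ofFn_succ, List.prod_cons]
  rfl

lemma aux_anticomm (M : Submodule R₀ R) (hsq : ∀ a ∈ M, a * a = 0)
    {a b : R} (ha : a ∈ M) (hb : b ∈ M) : a * b = -(b * a) := by
  have h := hsq (a + b) (M.add_mem ha hb)
  rw [add_mul, mul_add, mul_add, hsq a ha, hsq b hb, zero_add, add_zero] at h
  exact eq_neg_of_add_eq_zero_left h

lemma aux_mul_oddProd_eq_zero (M : Submodule R₀ R) (hsq : ∀ a ∈ M, a * a = 0) :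
    ∀ {u : ℕ} {a : R}, a ∈ M → ∀ {w : Fin u → R},
    (∀ i, w i ∈ M) → ∀ {k : Fin u}, w k = a → a * oddProd w = 0 := by
  intro u
  induction u with
  | zero => intro a _ w _ k _; exact k.elim0
  | succ n ih =>
    intro a ha w hw k hk
    rw [oddProd_succ]
    rcases Fin.eq_zero_or_eq_succ k with h | ⟨k', rfl⟩
    · subst h
      rw [← mul_assoc, ← hk, hsq _ (hw 0), zero_mul]
    · have h1 : a * w 0 = -(w 0 * a) := aux_anticomm M hsq ha (hw 0)
      have h2 : a * oddProd (w ∘ Fin.succ) = 0 :=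
        ih ha (fun i => hw i.succ) (k := k') hk
      rw [← mul_assoc, h1, neg_mul, mul_assoc, h2, mul_zero, neg_zero]

lemma aux_oddProd_eq_zero (M : Submodule R₀ R) (hsq : ∀ a ∈ M, a * a = 0) :
    ∀ {u : ℕ} {w : Fin u → R}, (∀ i, w i ∈ M) →
    ∀ {i j : Fin u}, i ≠ j → w i = w j → oddProd w = 0 := by
  intro u
  induction u with
  | zero => intro w _ i _ _ _; exact i.elim0
  | succ n ih =>
    intro w hw i j hij hwij
    rcases Fin.eq_zero_or_eq_succ i with hi | ⟨i', rfl⟩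
    · subst hi
      rcases Fin.eq_zero_or_eq_succ j with hj | ⟨j', rfl⟩
      · exact absurd hj.symm hij
      · rw [oddProd_succ]
        exact aux_mul_oddProd_eq_zero M hsq (hw 0) (fun i => hw i.succ)
          (k := j') hwij.symm
    · rcases Fin.eq_zero_or_eq_succ j with hj | ⟨j', rfl⟩
      · subst hj
        rw [oddProd_succ]
        exact aux_mul_oddProd_eq_zero M hsq (hw 0) (fun i => hw i.succ)
          (k := i') hwij
      · rw [oddProd_succ]
        have hne : i' ≠ j' := fun h => hij (by rw [h])
        have : oddProd (w ∘ Fin.succ) = 0 :=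
          ih (fun i => hw i.succ) (i := i') (j := j') hne hwij
        rw [this, mul_zero]

lemma aux_mul_mem {t n : ℕ} (z : Fin t → R) {x v : R}
    (hx : x ∈ Submodule.span R₀ (Set.range z))
    (hv : v ∈ Submodule.span R₀
      (Set.range fun f : Fin n → Fin t => oddProd (z ∘ f))) :
    x * v ∈ Submodule.span R₀
      (Set.range fun f : Fin (n + 1) → Fin t => oddProd (z ∘ f)) := by
  induction hx using Submodule.span_induction with
  | mem x hxmem =>
    obtain ⟨j, rfl⟩ := hxmem
    induction hv using Submodule.span_induction with
    | mem v hvmem =>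
      obtain ⟨f, rfl⟩ := hvmem
      refine Submodule.subset_span ⟨Fin.cons j f, ?_⟩
      show oddProd (z ∘ Fin.cons j f) = _
      have hc : (z ∘ Fin.cons j f) ∘ Fin.succ = z ∘ f := by
        funext i; simp [Function.comp]
      rw [oddProd_succ, hc]
      simp [Function.comp]
    | zero => rw [mul_zero]; exact Submodule.zero_mem _
    | add v₁ v₂ _ _ h1 h2 => rw [mul_add]; exact Submodule.add_mem _ h1 h2
    | smul r v _ h => rw [mul_smul_comm]; exact Submodule.smul_mem _ _ h
  | zero => rw [zero_mul]; exact Submodule.zero_mem _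
  | add x₁ x₂ _ _ h1 h2 => rw [add_mul]; exact Submodule.add_mem _ h1 h2
  | smul r x _ h => rw [smul_mul_assoc]; exact Submodule.smul_mem _ _ h

lemma aux_span {t : ℕ} {z : Fin t → R} : ∀ {u : ℕ} {y : Fin u → R},
    (∀ i, y i ∈ Submodule.span R₀ (Set.range z)) →
    oddProd y ∈ Submodule.span R₀
      (Set.range fun f : Fin u → Fin t => oddProd (z ∘ f)) := by
  intro u
  induction u with
  | zero =>
    intro y _
    refine Submodule.subset_span ⟨Fin.elim0, ?_⟩
    simp [oddProd]
  | succ n ih =>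
    intro y hy
    rw [oddProd_succ]
    exact aux_mul_mem z (hy 0) (ih fun i => hy i.succ)

/-- Key vanishing: a product of more than `t` elements of the span of `t`
square-zero elements vanishes. -/
lemma aux_vanish (M : Submodule R₀ R) (hsq : ∀ a ∈ M, a * a = 0)
    {t : ℕ} {z : Fin t → R} (hzM : ∀ i, z i ∈ M)
    {u : ℕ} {y : Fin u → R}
    (hy : ∀ i, y i ∈ Submodule.span R₀ (Set.range z)) (hut : t < u) :
    oddProd y = 0 := by
  have h1 := aux_span (R₀ := R₀) (z := z) hy
  have h2 : (Set.range fun f : Fin u → Fin t => oddProd (z ∘ f)) ⊆ {(0 : R)} := by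
    rintro _ ⟨f, rfl⟩
    obtain ⟨i, j, hij, hfij⟩ :=
      Fintype.exists_ne_map_eq_of_card_lt f (by simpa using hut)
    have := aux_oddProd_eq_zero M hsq (w := z ∘ f) (fun i => hzM (f i))
      (i := i) (j := j) hij (by simp [Function.comp, hfij])
    simpa using this
  have h3 : Submodule.span R₀
      (Set.range fun f : Fin u → Fin t => oddProd (z ∘ f)) ≤ ⊥ := by
    rw [← Submodule.span_zero_singleton (R := R₀) (M := R)]
    exact Submodule.span_mono h2
  simpa using h3 h1

end Aux

/-- Let `(A, m)` be a local Noetherian super-commutative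
super-ring (even part the local ring `R₀`) and suppose `z₁,…,z_t ∈ A₁` form a
minimal generating set of the `A₀`-module `A₁` (equivalently, induce a `K`-basis
of `A₁/m₀A₁ = (m/m²)₁`).  Then every system of odd parameters has cardinality
at most `t`; in particular `Ksdim₁(A) ≤ dim_K (m/m²)₁`. -/
theorem sop_card_le_minimal_generators
    {R₀ R : Type*} [CommRing R₀] [Ring R] [Algebra R₀ R]
    (𝒜 : ZMod 2 → Submodule R₀ R) [GradedAlgebra 𝒜]
    (h0 : 𝒜 0 = 1) (hinj : Function.Injective (algebraMap R₀ R))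
    (hsq : ∀ a ∈ 𝒜 1, a * a = 0)
    [IsLocalRing R₀] [IsNoetherianRing R₀] [Module.Finite R₀ (𝒜 1)]
    (t : ℕ) (z : Fin t → R) (hz : ∀ i, z i ∈ 𝒜 1)
    (hgen : Submodule.span R₀ (Set.range z) = 𝒜 1)
    (hmin : ∀ (t' : ℕ) (w : Fin t' → R), (∀ i, w i ∈ 𝒜 1) →
      Submodule.span R₀ (Set.range w) = 𝒜 1 → t ≤ t') :
    (∀ (u : ℕ) (y : Fin u → R), (∀ i, y i ∈ 𝒜 1) →
      ringKrullDim (R₀ ⧸ Ideal.torsionOf R₀ R (oddProd y)) = ringKrullDim R₀ →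
      u ≤ t) ∧
    sSup {u : ℕ | ∃ y : Fin u → R, (∀ i, y i ∈ 𝒜 1) ∧
      ringKrullDim (R₀ ⧸ Ideal.torsionOf R₀ R (oddProd y)) = ringKrullDim R₀}
      ≤ t := by
  have key : ∀ (u : ℕ) (y : Fin u → R), (∀ i, y i ∈ 𝒜 1) →
      ringKrullDim (R₀ ⧸ Ideal.torsionOf R₀ R (oddProd y)) = ringKrullDim R₀ →
      u ≤ t := by
    intro u y hy hdim
    by_contra hut
    push_neg at hut
    have hy' : ∀ i, y i ∈ Submodule.span R₀ (Set.range z) := by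
      intro i; rw [hgen]; exact hy i
    have h0' : oddProd y = 0 := aux_vanish (𝒜 1) hsq hz hy' hut
    rw [h0', Ideal.torsionOf_zero] at hdim
    have hsub : Subsingleton (R₀ ⧸ (⊤ : Ideal R₀)) :=
      Ideal.Quotient.subsingleton_iff.mpr rfl
    rw [ringKrullDim_eq_bot_of_subsingleton] at hdim
    have hpos := ringKrullDim_nonneg_of_nontrivial (R := R₀)
    rw [← hdim] at hpos
    exact absurd hpos (by simp)
  refine ⟨key, ?_⟩
  rcases Set.eq_empty_or_nonempty {u : ℕ | ∃ y : Fin u → R, (∀ i, y i ∈ 𝒜 1) ∧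
      ringKrullDim (R₀ ⧸ Ideal.torsionOf R₀ R (oddProd y)) = ringKrullDim R₀}
    with h | h
  · rw [h, csSup_empty]; exact Nat.zero_le t
  · exact csSup_le h (by rintro u ⟨y, hy, hdim⟩; exact key u y hy hdim)
end
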